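/- Let d ≥ 5, let δ be an integer with 1 ≤ δ ≤ d − δ, and set m = d − δ. Let Z = (z_{ij})_{1≤i≤δ, 1≤j≤m} be a matrix of indeterminates. Then the quotient ring A = O[z_{ij}] / (I₂(Z) + (T'(Z) + 4π)) is flat as an O-module. -/

import Mathlib

open MvPolynomial

noncomputable section

/-- The ideal `I₂(Z)` of `O[z_{ij}]` generated by all `2 × 2` minors
`z_{ij} z_{i'j'} - z_{ij'} z_{i'j}` of the `δ × m` matrix of indeterminates `Z`. -/
def minors2 (O : Type*) [CommRing O] (δ m : ℕ) : Ideal (MvPolynomial (Fin δ × Fin m) O) :=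
  Ideal.span {f | ∃ (i i' : Fin δ) (j j' : Fin m),
    f = X (i, j) * X (i', j') - X (i, j') * X (i', j)}

/-- The quadratic polynomial `T'(Z) = Σ_{i=1}^{δ} Σ_{j=1}^{m} z_{i,m+1-j} z_{δ+1-i,j}`
(written with 0-indexing via `Fin.rev`). -/
def Tpoly (O : Type*) [CommRing O] (δ m : ℕ) : MvPolynomial (Fin δ × Fin m) O :=
  ∑ i : Fin δ, ∑ j : Fin m, X (i, j.rev) * X (i.rev, j)

namespace Stmt4Aux

variable {C : Type*} [CommRing C] {δ m : ℕ}

/-- The Segre map. -/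
def segre (C : Type*) [CommRing C] (δ m : ℕ) :
    MvPolynomial (Fin δ × Fin m) C →ₐ[C] MvPolynomial (Fin δ ⊕ Fin m) C :=
  aeval (fun p : Fin δ × Fin m => X (Sum.inl p.1) * X (Sum.inr p.2))

lemma minors2_le_ker : minors2 C δ m ≤ RingHom.ker (segre C δ m) := by
  rw [minors2, Ideal.span_le]
  rintro f ⟨i, i', j, j', rfl⟩
  simp only [SetLike.mem_coe, RingHom.mem_ker, map_sub, map_mul, segre, aeval_X]
  ring

/-- Products of variables along a zipped list, modulo permutation of the second list. -/
lemma prod_zip_perm (s s' : List (Fin m)) (hp : s.Perm s') :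
    ∀ f : List (Fin δ), f.length = s.length →
      (((f.zip s).map X).prod : MvPolynomial (Fin δ × Fin m) C)
        - ((f.zip s').map X).prod ∈ minors2 C δ m := by
  induction hp with
  | nil => intro f hf; simp
  | cons x h ih =>
    intro f hf
    match f with
    | [] => simp at hf
    | a :: f' =>
      simp only [List.zip_cons_cons, List.map_cons, List.prod_cons]
      have h' := Ideal.mul_mem_left _ (X (a, x)) (ih f' (by simpa using hf))
      simpa [mul_sub] using h'
  | swap x y l =>
    intro f hf
    match f with
    | a :: b :: f' =>
      simp only [List.zip_cons_cons, List.map_cons, List.prod_cons]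
      have : (X (a, y) : MvPolynomial (Fin δ × Fin m) C) * (X (b, x) * ((f'.zip l).map X).prod)
          - X (a, x) * (X (b, y) * ((f'.zip l).map X).prod)
          = (X (a, y) * X (b, x) - X (a, x) * X (b, y)) * ((f'.zip l).map X).prod := by ring
      rw [this]
      exact Ideal.mul_mem_right _ _ (Ideal.subset_span ⟨a, b, y, x, rfl⟩)
  | trans h1 h2 ih1 ih2 =>
    intro f hf
    have := ih1 f hf
    have h2' := ih2 f (hf.trans h1.length_eq)
    simpa using add_mem this h2'

/-- Alignment: reorder a list of pairs so its list of first components matches a given list. -/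
lemma exists_perm_map_fst_eq {α β : Type*} [DecidableEq α] [DecidableEq β] :
    ∀ (lf : List α) (l : List (α × β)), (l.map Prod.fst).Perm lf →
      ∃ l' : List (α × β), l'.Perm l ∧ l'.map Prod.fst = lf := by
  intro lf
  induction lf with
  | nil =>
    intro l hl
    have : l.map Prod.fst = [] := List.Perm.eq_nil hl
    have : l = [] := by simpa using congrArg List.length this
    exact ⟨[], by simp [this]⟩
  | cons a lf' ih =>
    intro l hl
    have ha : a ∈ l.map Prod.fst := hl.mem_iff.2 (by simp)
    letI : BEq (α × β) := instBEqOfDecidableEq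
    obtain ⟨x, hx, hxa⟩ := List.mem_map.1 ha
    have hperm : l.Perm (x :: l.erase x) := List.perm_cons_erase hx
    have h2 : ((x :: l.erase x).map Prod.fst).Perm (a :: lf') :=
      ((hperm.map Prod.fst).symm.trans hl)
    rw [List.map_cons, hxa] at h2
    have h3 : ((l.erase x).map Prod.fst).Perm lf' := h2.cons_inv
    obtain ⟨l'', hl''p, hl''⟩ := ih (l.erase x) h3
    exact ⟨x :: l'', (hl''p.cons x).trans hperm.symm, by simp [hl'', hxa]⟩

/-- Claim A, multiset version. -/
lemma prod_multiset_mem (S T : Multiset (Fin δ × Fin m))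
    (h1 : S.map Prod.fst = T.map Prod.fst) (h2 : S.map Prod.snd = T.map Prod.snd) :
    ((S.map X).prod : MvPolynomial (Fin δ × Fin m) C) - (T.map X).prod ∈ minors2 C δ m := by
  induction S, T using Quotient.inductionOn₂ with
  | _ lS lT =>
  simp only [Multiset.quot_mk_to_coe, Multiset.quot_mk_to_coe', Multiset.quot_mk_to_coe'', Multiset.map_coe, Multiset.prod_coe] at h1 h2 ⊢
  have h1' : (lT.map Prod.fst).Perm (lS.map Prod.fst) := by
    rw [← Multiset.coe_eq_coe]; exact h1.symm
  obtain ⟨lT', hTp, hTfst⟩ := exists_perm_map_fst_eq (lS.map Prod.fst) lT h1'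
  have hprodT : ((lT.map X).prod : MvPolynomial (Fin δ × Fin m) C) = (lT'.map X).prod :=
    ((hTp.map X).prod_eq).symm
  rw [hprodT]
  have hsnd : (lS.map Prod.snd).Perm (lT'.map Prod.snd) := by
    have : (lT'.map Prod.snd).Perm (lT.map Prod.snd) := hTp.map Prod.snd
    have h2' : (lS.map Prod.snd).Perm (lT.map Prod.snd) := by
      rw [← Multiset.coe_eq_coe]; exact h2
    exact h2'.trans this.symm
  have hzipS : lS = (lS.map Prod.fst).zip (lS.map Prod.snd) := by
    rw [← List.unzip_fst, ← List.unzip_snd, List.zip_unzip]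
  have hzipT : lT' = (lT'.map Prod.fst).zip (lT'.map Prod.snd) := by
    rw [← List.unzip_fst, ← List.unzip_snd, List.zip_unzip]
  have := prod_zip_perm (C := C) (lS.map Prod.snd) (lT'.map Prod.snd) hsnd
    (lS.map Prod.fst) (by simp)
  rw [← hzipS, ← hTfst, ← hzipT] at this
  simpa using this

/-- The row/column exponent data of an exponent vector. -/
def rc (s : Fin δ × Fin m →₀ ℕ) : (Fin δ ⊕ Fin m) →₀ ℕ :=
  Finsupp.mapDomain (Sum.inl ∘ Prod.fst) s + Finsupp.mapDomain (Sum.inr ∘ Prod.snd) s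

lemma rc_single (p : Fin δ × Fin m) (n : ℕ) :
    rc (Finsupp.single p n) = Finsupp.single (Sum.inl p.1) n + Finsupp.single (Sum.inr p.2) n := by
  simp [rc, Finsupp.mapDomain_single]

lemma rc_add (s t : Fin δ × Fin m →₀ ℕ) : rc (s + t) = rc s + rc t := by
  simp [rc, Finsupp.mapDomain_add]; abel

lemma monomial_toMultiset (s : Fin δ × Fin m →₀ ℕ) :
    (monomial s 1 : MvPolynomial (Fin δ × Fin m) C) = (s.toMultiset.map X).prod := by
  rw [Finsupp.toMultiset_map, Finsupp.prod_toMultiset,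
    Finsupp.prod_mapDomain_index (by simp) (by simp [pow_add]), monomial_eq, C_1, one_mul]

lemma rc_fst (s t : Fin δ × Fin m →₀ ℕ) (h : rc s = rc t) :
    s.toMultiset.map Prod.fst = t.toMultiset.map Prod.fst := by
  have h' := congrArg Finsupp.toMultiset h
  rw [rc, rc, Finsupp.toMultiset_add, Finsupp.toMultiset_add] at h'
  simp only [← Finsupp.toMultiset_map] at h'
  have e1 : ∀ M : Multiset (Fin δ × Fin m),
      Multiset.map (Sum.inl ∘ Prod.fst : _ → Fin δ ⊕ Fin m) M
        = Multiset.map Sum.inl (Multiset.map Prod.fst M) := fun M =>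
    (Multiset.map_map _ _ _).symm
  have e2 : ∀ M : Multiset (Fin δ × Fin m),
      Multiset.map (Sum.inr ∘ Prod.snd : _ → Fin δ ⊕ Fin m) M
        = Multiset.map Sum.inr (Multiset.map Prod.snd M) := fun M =>
    (Multiset.map_map _ _ _).symm
  rw [e1, e2, e1, e2] at h'
  ext i
  have hc := congrArg (Multiset.count (Sum.inl i : Fin δ ⊕ Fin m)) h'
  rw [Multiset.count_add, Multiset.count_add,
    Multiset.count_map_eq_count' _ _ Sum.inl_injective,
    Multiset.count_map_eq_count' _ _ Sum.inl_injective,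
    Multiset.count_eq_zero_of_notMem
      (fun hmem => by obtain ⟨x, -, hx⟩ := Multiset.mem_map.1 hmem; exact Sum.inl_ne_inr hx.symm
        : (Sum.inl i : Fin δ ⊕ Fin m) ∉ Multiset.map Sum.inr (Multiset.map Prod.snd s.toMultiset)),
    Multiset.count_eq_zero_of_notMem
      (fun hmem => by obtain ⟨x, -, hx⟩ := Multiset.mem_map.1 hmem; exact Sum.inl_ne_inr hx.symm
        : (Sum.inl i : Fin δ ⊕ Fin m) ∉ Multiset.map Sum.inr (Multiset.map Prod.snd t.toMultiset)),
    add_zero, add_zero] at hc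
  exact hc

lemma rc_snd (s t : Fin δ × Fin m →₀ ℕ) (h : rc s = rc t) :
    s.toMultiset.map Prod.snd = t.toMultiset.map Prod.snd := by
  have h' := congrArg Finsupp.toMultiset h
  rw [rc, rc, Finsupp.toMultiset_add, Finsupp.toMultiset_add] at h'
  simp only [← Finsupp.toMultiset_map] at h'
  have e1 : ∀ M : Multiset (Fin δ × Fin m),
      Multiset.map (Sum.inl ∘ Prod.fst : _ → Fin δ ⊕ Fin m) M
        = Multiset.map Sum.inl (Multiset.map Prod.fst M) := fun M =>
    (Multiset.map_map _ _ _).symm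
  have e2 : ∀ M : Multiset (Fin δ × Fin m),
      Multiset.map (Sum.inr ∘ Prod.snd : _ → Fin δ ⊕ Fin m) M
        = Multiset.map Sum.inr (Multiset.map Prod.snd M) := fun M =>
    (Multiset.map_map _ _ _).symm
  rw [e1, e2, e1, e2] at h'
  ext j
  have hc := congrArg (Multiset.count (Sum.inr j : Fin δ ⊕ Fin m)) h'
  rw [Multiset.count_add, Multiset.count_add,
    Multiset.count_map_eq_count' _ _ Sum.inr_injective,
    Multiset.count_map_eq_count' _ _ Sum.inr_injective,
    Multiset.count_eq_zero_of_notMem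
      (fun hmem => by obtain ⟨x, -, hx⟩ := Multiset.mem_map.1 hmem; exact Sum.inl_ne_inr hx
        : (Sum.inr j : Fin δ ⊕ Fin m) ∉ Multiset.map Sum.inl (Multiset.map Prod.fst s.toMultiset)),
    Multiset.count_eq_zero_of_notMem
      (fun hmem => by obtain ⟨x, -, hx⟩ := Multiset.mem_map.1 hmem; exact Sum.inl_ne_inr hx
        : (Sum.inr j : Fin δ ⊕ Fin m) ∉ Multiset.map Sum.inl (Multiset.map Prod.fst t.toMultiset)),
    zero_add, zero_add] at hc
  exact hc

/-- Claim A: two monomials with the same row and column data agree modulo the minors. -/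
lemma monomial_sub_mem (s t : Fin δ × Fin m →₀ ℕ) (h : rc s = rc t) :
    (monomial s 1 : MvPolynomial (Fin δ × Fin m) C) - monomial t 1 ∈ minors2 C δ m := by
  rw [monomial_toMultiset, monomial_toMultiset]
  exact prod_multiset_mem _ _ (rc_fst s t h) (rc_snd s t h)

lemma segre_monomial (s : Fin δ × Fin m →₀ ℕ) (c : C) :
    segre C δ m (monomial s c) = monomial (rc s) c := by
  induction s using Finsupp.induction with
  | zero =>
    rw [show rc (0 : Fin δ × Fin m →₀ ℕ) = 0 by simp [rc]]
    rw [monomial_zero', monomial_zero']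
    simp [segre]
  | single_add p n s hps hn ih =>
    have key : (monomial (Finsupp.single p n + s) c : MvPolynomial (Fin δ × Fin m) C)
        = monomial (Finsupp.single p n) 1 * monomial s c := by
      rw [monomial_mul, one_mul]
    rw [key, map_mul, ih, ← X_pow_eq_monomial, map_pow]
    rw [show segre C δ m (X p) = X (Sum.inl p.1) * X (Sum.inr p.2) from aeval_X _ _]
    rw [mul_pow, X_pow_eq_monomial, X_pow_eq_monomial, monomial_mul, monomial_mul,
      rc_add, rc_single, one_mul, one_mul]

/-- The kernel of the Segre map is exactly the ideal of 2×2 minors. -/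
lemma ker_segre : RingHom.ker (segre C δ m) = minors2 C δ m := by
  refine le_antisymm ?_ minors2_le_ker
  intro f hf
  rw [RingHom.mem_ker] at hf
  classical
  set I := minors2 C δ m with hI
  have hmk : (Ideal.Quotient.mk I) f = 0 → f ∈ I := fun h =>
    (Ideal.Quotient.eq_zero_iff_mem).1 h
  apply hmk
  -- the function V
  set V : ((Fin δ ⊕ Fin m) →₀ ℕ) → (MvPolynomial (Fin δ × Fin m) C ⧸ I) := fun u =>
    if h : ∃ s : Fin δ × Fin m →₀ ℕ, rc s = u then
      Ideal.Quotient.mk I (monomial h.choose 1) else 0 with hVdef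
  have hV : ∀ s : Fin δ × Fin m →₀ ℕ, V (rc s) = Ideal.Quotient.mk I (monomial s 1) := by
    intro s
    have h : ∃ s' : Fin δ × Fin m →₀ ℕ, rc s' = rc s := ⟨s, rfl⟩
    rw [hVdef]
    simp only [dif_pos h]
    exact Ideal.Quotient.eq.2 (monomial_sub_mem _ _ h.choose_spec)
  -- the linear map L
  set L : MvPolynomial (Fin δ ⊕ Fin m) C →ₗ[C] (MvPolynomial (Fin δ × Fin m) C ⧸ I) :=
    (MvPolynomial.basisMonomials (Fin δ ⊕ Fin m) C).constr C V with hLdef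
  have hL : ∀ (u : (Fin δ ⊕ Fin m) →₀ ℕ) (c : C), L (monomial u c) = c • V u := by
    intro u c
    have : (monomial u c : MvPolynomial (Fin δ ⊕ Fin m) C) = c • monomial u 1 := by
      rw [smul_monomial, smul_eq_mul, mul_one]
    rw [this, map_smul, hLdef]
    congr 1
    have := (MvPolynomial.basisMonomials (Fin δ ⊕ Fin m) C).constr_basis C V u
    rwa [coe_basisMonomials] at this
  -- decomposition of f
  have hdec : f = ∑ s ∈ f.support, monomial s (coeff s f) :=
    (support_sum_monomial_coeff f).symm
  have hsegre : (0 : MvPolynomial (Fin δ ⊕ Fin m) C)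
      = ∑ s ∈ f.support, monomial (rc s) (coeff s f) := by
    rw [← hf]
    conv_lhs => rw [hdec]
    rw [map_sum]
    exact Finset.sum_congr rfl fun s _ => segre_monomial s (coeff s f)
  have := congrArg L hsegre
  rw [map_zero, map_sum] at this
  calc Ideal.Quotient.mk I f
      = ∑ s ∈ f.support, Ideal.Quotient.mk I (monomial s (coeff s f)) := by
        conv_lhs => rw [hdec]
        rw [map_sum]
    _ = ∑ s ∈ f.support, L (monomial (rc s) (coeff s f)) := by
        refine Finset.sum_congr rfl fun s _ => ?_
        rw [hL, hV]
        rw [show (monomial s (coeff s f) : MvPolynomial (Fin δ × Fin m) C)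
          = coeff s f • monomial s 1 by rw [smul_monomial, smul_eq_mul, mul_one]]
        exact (map_smul (Ideal.Quotient.mkₐ C I) (coeff s f) (monomial s 1)).symm ▸ rfl
    _ = 0 := this.symm

end Stmt4Aux

namespace Stmt4Aux

section Flatness

open scoped TensorProduct

variable {R M : Type*} [CommRing R] [IsDomain R] [IsPrincipalIdealRing R]
  [AddCommGroup M] [Module R M]

lemma flat_of_isSMulRegular (hreg : ∀ r : R, r ≠ 0 → IsSMulRegular M r) : Module.Flat R M := by
  rw [Module.Flat.iff_rTensor_injective']
  intro I
  obtain ⟨a, ha⟩ := (IsPrincipalIdealRing.principal I).principal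
  rcases eq_or_ne a 0 with rfl | ha0
  · have hI : I = ⊥ := by simp [ha]
    clear ha
    subst hI
    have hz : ∀ x : TensorProduct R (⊥ : Ideal R) M, x = 0 := by
      intro x
      induction x using TensorProduct.induction_on with
      | zero => rfl
      | tmul r y =>
        have hr0 : r = 0 := Subtype.ext ((Submodule.mem_bot R).1 r.2)
        rw [hr0, TensorProduct.zero_tmul]
      | add x y hx hy => rw [hx, hy, add_zero]
    intro x y _
    rw [hz x, hz y]
  · subst ha
    have hmem : a ∈ Ideal.span {a} := Ideal.subset_span rfl
    set g : R →ₗ[R] Ideal.span {a} := LinearMap.toSpanSingleton R _ ⟨a, hmem⟩ with hg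
    have hgsurj : Function.Surjective g := by
      rintro ⟨x, hx⟩
      obtain ⟨r, rfl⟩ := (Ideal.mem_span_singleton').1 hx
      exact ⟨r, rfl⟩
    have hcomp : (Ideal.span {a}).subtype ∘ₗ g = LinearMap.toSpanSingleton R R a := by
      ext r
      simp [hg, LinearMap.toSpanSingleton]
    have key : ∀ x : R ⊗[R] M,
        TensorProduct.lid R M (LinearMap.rTensor M (LinearMap.toSpanSingleton R R a) x)
          = a • TensorProduct.lid R M x := by
      intro x
      induction x using TensorProduct.induction_on with
      | zero => simp
      | tmul r y =>
        simp [LinearMap.toSpanSingleton, smul_smul, mul_comm]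
      | add x y hx hy => simp [hx, hy]
    have hinj : Function.Injective (LinearMap.rTensor M (LinearMap.toSpanSingleton R R a)) := by
      intro x y hxy
      have h1 := key x
      have h2 := key y
      rw [hxy, h2] at h1
      have h3 : TensorProduct.lid R M x = TensorProduct.lid R M y :=
        hreg a ha0 h1.symm
      exact (TensorProduct.lid R M).injective h3
    intro x y hxy
    obtain ⟨x', rfl⟩ := LinearMap.rTensor_surjective M hgsurj x
    obtain ⟨y', rfl⟩ := LinearMap.rTensor_surjective M hgsurj y
    have hxy2 : LinearMap.rTensor M (LinearMap.toSpanSingleton R R a) x'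
        = LinearMap.rTensor M (LinearMap.toSpanSingleton R R a) y' := by
      rw [← hcomp, LinearMap.rTensor_comp, LinearMap.comp_apply, LinearMap.comp_apply]
      exact hxy
    rw [hinj hxy2]

end Flatness

section Eval

variable {k : Type*} [CommRing k]

lemma sum_ind_rev_ne (h1 : (1 : k) ≠ 0) (h2 : (2 : k) ≠ 0) (n : ℕ) [NeZero n] :
    (∑ i : Fin n, (if i = 0 ∨ i = Fin.rev 0 then (1 : k) else 0)
      * (if i.rev = 0 ∨ i.rev = Fin.rev 0 then (1 : k) else 0)) ≠ 0 := by
  classical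
  have hiff : ∀ i : Fin n, (i.rev = 0 ∨ i.rev = Fin.rev 0) ↔ (i = 0 ∨ i = Fin.rev 0) := by
    intro i
    constructor
    · rintro (h | h)
      · right
        have := congrArg Fin.rev h
        rwa [Fin.rev_rev] at this
      · left
        exact Fin.rev_injective h
    · rintro (h | h)
      · right; rw [h]
      · left
        have := congrArg Fin.rev h
        rwa [Fin.rev_rev] at this
  have hterm : ∀ i : Fin n,
      (if i = 0 ∨ i = Fin.rev 0 then (1 : k) else 0)
        * (if i.rev = 0 ∨ i.rev = Fin.rev 0 then (1 : k) else 0)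
      = if i = 0 ∨ i = Fin.rev 0 then (1 : k) else 0 := by
    intro i
    by_cases hP : i = 0 ∨ i = Fin.rev 0
    · rw [if_pos hP, if_pos ((hiff i).2 hP), one_mul]
    · rw [if_neg hP, zero_mul]
  rw [Finset.sum_congr rfl fun i _ => hterm i, Finset.sum_boole]
  have hfil : (Finset.univ.filter (fun i : Fin n => i = 0 ∨ i = Fin.rev 0))
      = {0, Fin.rev 0} := by
    ext i
    simp [Finset.mem_filter, Finset.mem_insert]
  rw [hfil]
  have hcard : ({0, Fin.rev 0} : Finset (Fin n)).card = 1
      ∨ ({0, Fin.rev 0} : Finset (Fin n)).card = 2 := by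
    by_cases h0 : (0 : Fin n) = Fin.rev 0
    · left; rw [← h0]; simp
    · right; rw [Finset.card_insert_of_notMem (by simpa using h0), Finset.card_singleton]
  rcases hcard with h | h
  · rw [h]; simpa using h1
  · rw [h]; simpa using h2

lemma segre_Tpoly_ne_zero [NoZeroDivisors k] (δ m : ℕ) [NeZero δ] [NeZero m]
    (h1 : (1 : k) ≠ 0) (h2 : (2 : k) ≠ 0) :
    segre k δ m (Tpoly k δ m) ≠ 0 := by
  intro h0
  classical
  set v : Fin δ → k := fun i => if i = 0 ∨ i = Fin.rev 0 then 1 else 0 with hv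
  set w : Fin m → k := fun j => if j = 0 ∨ j = Fin.rev 0 then 1 else 0 with hw
  set pt : Fin δ ⊕ Fin m → k := Sum.elim v w with hpt
  have hval := congrArg (eval pt) h0
  rw [map_zero] at hval
  have hseg : eval pt (segre k δ m (Tpoly k δ m))
      = (∑ i : Fin δ, v i * v i.rev) * (∑ j : Fin m, w j * w j.rev) := by
    simp only [Tpoly, map_sum, map_mul, segre, aeval_X, eval_X, hpt, Sum.elim_inl, Sum.elim_inr]
    rw [Finset.sum_mul_sum]
    exact Finset.sum_congr rfl fun i _ => Finset.sum_congr rfl fun j _ => by ring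
  rw [hseg] at hval
  rcases mul_eq_zero.1 hval with h | h
  · exact sum_ind_rev_ne h1 h2 δ h
  · exact sum_ind_rev_ne h1 h2 m h

end Eval

section Map

variable {O k : Type*} [CommRing O] [CommRing k] (ρ : O →+* k) (δ m : ℕ)

lemma map_Tpoly : MvPolynomial.map ρ (Tpoly O δ m) = Tpoly k δ m := by
  simp [Tpoly]

lemma map_minors2 :
    Ideal.map (MvPolynomial.map ρ) (minors2 O δ m) = minors2 k δ m := by
  rw [minors2, minors2, Ideal.map_span]
  congr 1
  ext f
  constructor
  · rintro ⟨g, ⟨i, i', j, j', rfl⟩, rfl⟩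
    exact ⟨i, i', j, j', by simp⟩
  · rintro ⟨i, i', j, j', rfl⟩
    exact ⟨X (i, j) * X (i', j') - X (i, j') * X (i', j), ⟨i, i', j, j', rfl⟩, by simp⟩

end Map

end Stmt4Aux

namespace Stmt4Aux

section Saturation

variable {O : Type*} [CommRing O] [IsDomain O] [IsDiscreteValuationRing O]

lemma residue_pi_eq_zero (π : O) (hπ : Irreducible π) : IsLocalRing.residue O π = 0 :=
  Ideal.Quotient.eq_zero_iff_mem.2 (hπ.maximalIdeal_eq ▸ Ideal.subset_span rfl)

lemma ker_residue_map (π : O) (hπ : Irreducible π) {δ m : ℕ} :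
    Ideal.comap (MvPolynomial.map (IsLocalRing.residue O) :
        MvPolynomial (Fin δ × Fin m) O →+* MvPolynomial (Fin δ × Fin m) (IsLocalRing.ResidueField O))
      ⊥ = Ideal.span {(C π : MvPolynomial (Fin δ × Fin m) O)} := by
  rw [← RingHom.ker_eq_comap_bot, MvPolynomial.ker_map]
  have hker : RingHom.ker (IsLocalRing.residue O) = Ideal.span {π} := by
    rw [IsLocalRing.ker_residue, hπ.maximalIdeal_eq]
  rw [hker, Ideal.map_span, Set.image_singleton]

lemma sat (π : O) (hπ : Irreducible π) (δ m : ℕ) [NeZero δ] [NeZero m]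
    (h2 : (2 : IsLocalRing.ResidueField O) ≠ 0)
    (a : MvPolynomial (Fin δ × Fin m) O)
    (ha : C π * a ∈ minors2 O δ m + Ideal.span {Tpoly O δ m + C (4 * π)}) :
    a ∈ minors2 O δ m + Ideal.span {Tpoly O δ m + C (4 * π)} := by
  classical
  set k := IsLocalRing.ResidueField O with hk
  set ρ : O →+* k := IsLocalRing.residue O with hρ
  set Φ : MvPolynomial (Fin δ × Fin m) O →+* MvPolynomial (Fin δ × Fin m) k :=
    (MvPolynomial.map ρ : _) with hΦ
  set f := Tpoly O δ m + C (4 * π) with hfdef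
  have hρπ : ρ π = 0 := residue_pi_eq_zero π hπ
  rw [Submodule.add_eq_sup] at ha ⊢
  obtain ⟨b, hb, c, hc, hbc⟩ := Submodule.mem_sup.1 ha
  obtain ⟨h, rfl⟩ := Ideal.mem_span_singleton'.1 hc
  have hΦf : Φ f = Tpoly k δ m := by
    rw [hfdef, map_add, map_Tpoly, MvPolynomial.map_C, map_mul, hρπ, mul_zero, map_zero, add_zero]
  have hΦπ : Φ (C π * a) = 0 := by
    rw [map_mul, MvPolynomial.map_C, hρπ, map_zero, zero_mul]
  have h0 : Φ b + Φ h * Tpoly k δ m = 0 := by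
    have := congrArg Φ hbc
    rw [map_add, map_mul, hΦf, hΦπ] at this
    exact this
  have hTb : Φ h * Tpoly k δ m ∈ minors2 k δ m := by
    have heq : Φ h * Tpoly k δ m = -Φ b := eq_neg_of_add_eq_zero_right h0
    rw [heq]
    exact neg_mem (map_minors2 ρ δ m ▸ Ideal.mem_map_of_mem Φ hb)
  have hker : Φ h ∈ minors2 k δ m := by
    rw [← ker_segre] at hTb ⊢
    rw [RingHom.mem_ker] at hTb ⊢
    rw [map_mul] at hTb
    rcases mul_eq_zero.1 hTb with h' | h'
    · exact h'
    · exact absurd h' (segre_Tpoly_ne_zero δ m one_ne_zero h2)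
  have hsurj : Function.Surjective Φ :=
    MvPolynomial.map_surjective ρ Ideal.Quotient.mk_surjective
  have hcomap : h ∈ minors2 O δ m ⊔ Ideal.span {(C π : MvPolynomial (Fin δ × Fin m) O)} := by
    have h1 : h ∈ Ideal.comap Φ (Ideal.map Φ (minors2 O δ m)) := by
      rw [Ideal.mem_comap, map_minors2]
      exact hker
    rw [Ideal.comap_map_of_surjective Φ hsurj, ker_residue_map π hπ] at h1
    exact h1
  obtain ⟨b', hb', e, he, hbe⟩ := Submodule.mem_sup.1 hcomap
  obtain ⟨h', rfl⟩ := Ideal.mem_span_singleton'.1 he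
  have hmem : C π * (a - h' * f) ∈ minors2 O δ m := by
    have hcalc : C π * (a - h' * f) = b + b' * f := by
      have h3 : C π * a = b + h * f := hbc.symm
      have h4 : b' + h' * C π = h := hbe
      rw [mul_sub, h3, ← h4]
      ring
    rw [hcalc]
    exact add_mem hb (Ideal.mul_mem_right _ _ hb')
  have hsub : a - h' * f ∈ minors2 O δ m := by
    rw [← ker_segre, RingHom.mem_ker] at hmem ⊢
    rw [map_mul] at hmem
    rcases mul_eq_zero.1 hmem with hz | hz
    · exfalso
      have hCπ : segre O δ m (C π) = C π := by
        simp [segre]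
      rw [hCπ] at hz
      exact hπ.ne_zero (by simpa using (MvPolynomial.C_eq_zero).1 hz)
    · exact hz
  have hfin : a = (a - h' * f) + h' * f := by ring
  rw [hfin]
  exact add_mem (Submodule.mem_sup_left hsub)
    (Submodule.mem_sup_right (Ideal.mem_span_singleton'.2 ⟨h', rfl⟩))

end Saturation

end Stmt4Aux

/-- `A = O[z_{ij}]/(I₂(Z) + (T'(Z) + 4π))` is flat as an `O`-module. -/
theorem stmt_4 (O : Type*) [CommRing O] [IsDomain O] [IsDiscreteValuationRing O]
    [IsAdicComplete (IsLocalRing.maximalIdeal O) O]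
    (p : ℕ) [Fact p.Prime] (hp : p ≠ 2)
    [IsAlgClosed (IsLocalRing.ResidueField O)] [CharP (IsLocalRing.ResidueField O) p]
    (π : O) (hπ : Irreducible π)
    (d δ : ℕ) (hd : 5 ≤ d) (hδ1 : 1 ≤ δ) (hδ2 : δ ≤ d - δ) :
    Module.Flat O (MvPolynomial (Fin δ × Fin (d - δ)) O ⧸
      (minors2 O δ (d - δ) + Ideal.span {Tpoly O δ (d - δ) + C (4 * π)})) := by
  classical
  haveI : NeZero δ := ⟨by omega⟩
  haveI : NeZero (d - δ) := ⟨by omega⟩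
  have h2 : (2 : IsLocalRing.ResidueField O) ≠ 0 := by
    intro h0
    have h0' : ((2 : ℕ) : IsLocalRing.ResidueField O) = 0 := by push_cast; exact h0
    have hdvd : p ∣ 2 := (CharP.cast_eq_zero_iff (IsLocalRing.ResidueField O) p 2).1 h0'
    exact hp ((Nat.prime_dvd_prime_iff_eq Fact.out Nat.prime_two).1 hdvd)
  set J : Ideal (MvPolynomial (Fin δ × Fin (d - δ)) O) :=
    minors2 O δ (d - δ) + Ideal.span {Tpoly O δ (d - δ) + C (4 * π)} with hJ
  apply Stmt4Aux.flat_of_isSMulRegular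
  intro r hr
  obtain ⟨n, u, rfl⟩ := IsDiscreteValuationRing.eq_unit_mul_pow_irreducible hr hπ
  have hsmul : ∀ (c : O) (x : MvPolynomial (Fin δ × Fin (d - δ)) O),
      c • (Ideal.Quotient.mk J x) = Ideal.Quotient.mk J (C c * x) := by
    intro c x
    have := map_smul (Ideal.Quotient.mkₐ O J) c x
    rw [MvPolynomial.smul_eq_C_mul] at this
    exact this.symm ▸ rfl
  have hπreg : IsSMulRegular (MvPolynomial (Fin δ × Fin (d - δ)) O ⧸ J) π := by
    intro x y hxy
    obtain ⟨a, rfl⟩ := Ideal.Quotient.mk_surjective x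
    obtain ⟨b, rfl⟩ := Ideal.Quotient.mk_surjective y
    have hxy' : π • (Ideal.Quotient.mk J a) = π • (Ideal.Quotient.mk J b) := hxy
    rw [hsmul, hsmul] at hxy'
    have hmem : C π * a - C π * b ∈ J := Ideal.Quotient.eq.1 hxy'
    have hmem' : C π * (a - b) ∈ J := by rw [mul_sub]; exact hmem
    exact Ideal.Quotient.eq.2 (Stmt4Aux.sat π hπ δ (d - δ) h2 (a - b) hmem')
  have hureg : IsSMulRegular (MvPolynomial (Fin δ × Fin (d - δ)) O ⧸ J) (u : O) := by
    intro x y hxy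
    have := congrArg (fun z => ((↑u⁻¹ : O)) • z) hxy
    simpa [smul_smul] using this
  exact hureg.mul (hπreg.pow n)
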